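/- arXiv:2109.01602 — 10 statements merged into one kernel-verified Lean document; each statement's English description precedes it below -/
import Mathlib

section
/- Let A, B, C, O be points of the Euclidean plane (EuclideanSpace ℝ (Fin 2)) with O distinct from A, B and C, and suppose the (unsigned) angles at O satisfy ∠AOB = ∠BOC = ∠COA = 2π/3. Set a = dist(B,C), b = dist(A,C), c = dist(A,B), s = (a+b+c)/2 and Δ = √(s(s−a)(s−b)(s−c)). Then dist(O,A) + dist(O,B) + dist(O,C) = √((a² + b² + c² + 4√3·Δ)/2). -/
open EuclideanGeometry Real

/-- If `O` is a Fermat point of the triangle `ABC` in the Euclidean plane (all three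
unsigned angles at `O` equal `2π/3`), then with `a = dist B C`, `b = dist A C`,
`c = dist A B`, `s = (a+b+c)/2` and `Δ = √(s(s−a)(s−b)(s−c))`, one has
`dist O A + dist O B + dist O C = √((a² + b² + c² + 4√3·Δ)/2)`. -/
theorem stmt_5 (A B C O : EuclideanSpace ℝ (Fin 2))
    (hA : O ≠ A) (hB : O ≠ B) (hC : O ≠ C)
    (h₁ : ∠ A O B = 2 * π / 3) (h₂ : ∠ B O C = 2 * π / 3) (h₃ : ∠ C O A = 2 * π / 3)
    (a b c s Δ : ℝ)
    (ha : a = dist B C) (hb : b = dist A C) (hc : c = dist A B)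
    (hs : s = (a + b + c) / 2)
    (hΔ : Δ = Real.sqrt (s * (s - a) * (s - b) * (s - c))) :
    dist O A + dist O B + dist O C =
      Real.sqrt ((a ^ 2 + b ^ 2 + c ^ 2 + 4 * Real.sqrt 3 * Δ) / 2) := by
  set x := dist O A with hx
  set y := dist O B with hy
  set z := dist O C with hz
  have hcos : Real.cos (2 * π / 3) = -(1/2) := by
    have : (2 : ℝ) * π / 3 = π - π / 3 := by ring
    rw [this, Real.cos_pi_sub, Real.cos_pi_div_three]
  have ec : c ^ 2 = x ^ 2 + y ^ 2 + x * y := by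
    have := EuclideanGeometry.law_cos A O B
    rw [h₁, hcos] at this
    rw [hc]
    have hxa : dist A O = x := dist_comm A O
    have hyb : dist B O = y := dist_comm B O
    rw [hxa, hyb] at this
    linear_combination this
  have ea : a ^ 2 = y ^ 2 + z ^ 2 + y * z := by
    have := EuclideanGeometry.law_cos B O C
    rw [h₂, hcos] at this
    rw [ha]
    have h1 : dist B O = y := dist_comm B O
    have h2 : dist C O = z := dist_comm C O
    rw [h1, h2] at this
    linear_combination this
  have eb : b ^ 2 = z ^ 2 + x ^ 2 + z * x := by
    have := EuclideanGeometry.law_cos C O A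
    rw [h₃, hcos] at this
    rw [hb, dist_comm A C]
    have h1 : dist C O = z := dist_comm C O
    have h2 : dist A O = x := dist_comm A O
    rw [h1, h2] at this
    linear_combination this
  have hxn : 0 ≤ x := dist_nonneg
  have hyn : 0 ≤ y := dist_nonneg
  have hzn : 0 ≤ z := dist_nonneg
  have hQ : 0 ≤ x * y + y * z + z * x := by positivity
  have h3 : Real.sqrt 3 ^ 2 = 3 := Real.sq_sqrt (by norm_num)
  have hP : s * (s - a) * (s - b) * (s - c)
      = (Real.sqrt 3 * (x * y + y * z + z * x) / 4) ^ 2 := by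
    have key : 16 * (s * (s - a) * (s - b) * (s - c))
        = 2 * (a ^ 2 * b ^ 2 + b ^ 2 * c ^ 2 + c ^ 2 * a ^ 2)
          - ((a ^ 2) ^ 2 + (b ^ 2) ^ 2 + (c ^ 2) ^ 2) := by
      rw [hs]; ring
    rw [ea, eb, ec] at key
    linear_combination key/16 - ((x*y+y*z+z*x)^2/16)*h3
  have hΔ' : Δ = Real.sqrt 3 * (x * y + y * z + z * x) / 4 := by
    rw [hΔ, hP, Real.sqrt_sq (by positivity)]
  have hinner : (a ^ 2 + b ^ 2 + c ^ 2 + 4 * Real.sqrt 3 * Δ) / 2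
      = (x + y + z) ^ 2 := by
    rw [hΔ', ea, eb, ec]
    linear_combination ((x*y+y*z+z*x)/2)*h3
  rw [hinner, Real.sqrt_sq (by positivity)]
end

section
/- Let A, B, C, O be points of the Euclidean plane (EuclideanSpace ℝ (Fin 2)) with O distinct from A, B and C, and suppose the (unsigned) angles at O satisfy ∠AOB = ∠BOC = ∠COA = 2π/3. Then O minimizes the total distance to the three vertices: for every point P of the plane, dist(O,A) + dist(O,B) + dist(O,C) ≤ dist(P,A) + dist(P,B) + dist(P,C). -/
/-!
Let `d X := ‖X - O‖⁻¹ • (X - O)` be the unit direction from `O` towards `X`. The angle conditions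
say that the three directions have pairwise inner product `cos (2π/3) = -1/2`, which forces
`d A + d B + d C = 0`. Then
`∑ dist O X = ∑ ⟪X - O, d X⟫ = ∑ ⟪X - P, d X⟫ ≤ ∑ dist P X`,
the middle equality because the cross term `⟪P - O, ∑ d X⟫` vanishes, the inequality by
Cauchy–Schwarz.
-/

open InnerProductGeometry Real
open scoped InnerProductSpace

section InnerProductSpace

variable {V : Type*} [NormedAddCommGroup V] [InnerProductSpace ℝ V]

theorem real_inner_inv_norm_smul_self (x : V) : ⟪x, ‖x‖⁻¹ • x⟫_ℝ = ‖x‖ := by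
  rcases eq_or_ne ‖x‖ 0 with hx | hx
  · simp [hx]
  · rw [real_inner_smul_right, real_inner_self_eq_norm_sq]
    field_simp

theorem norm_inv_norm_smul_self {x : V} (hx : x ≠ 0) : ‖‖x‖⁻¹ • x‖ = 1 := by
  rw [norm_smul, norm_inv, norm_norm, inv_mul_cancel₀ (norm_ne_zero_iff.mpr hx)]

theorem norm_inv_norm_smul_self_le_one (x : V) : ‖‖x‖⁻¹ • x‖ ≤ 1 := by
  rcases eq_or_ne x 0 with rfl | hx
  · simp
  · exact (norm_inv_norm_smul_self hx).le

theorem real_inner_eq_neg_half_of_angle_eq {u v : V} (hu : ‖u‖ = 1) (hv : ‖v‖ = 1)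
    (h : angle u v = 2 * π / 3) : ⟪u, v⟫_ℝ = -(1 / 2) := by
  have hcos : cos (2 * π / 3) = -(1 / 2) := by
    rw [show 2 * π / 3 = π - π / 3 by ring, cos_pi_sub, cos_pi_div_three]
  rw [← cos_angle_mul_norm_mul_norm, h, hcos, hu, hv, mul_one, mul_one]

theorem add_add_eq_zero_of_real_inner_eq_neg_half {u v w : V}
    (hu : ‖u‖ = 1) (hv : ‖v‖ = 1) (hw : ‖w‖ = 1)
    (huv : ⟪u, v⟫_ℝ = -(1 / 2)) (hvw : ⟪v, w⟫_ℝ = -(1 / 2)) (hwu : ⟪w, u⟫_ℝ = -(1 / 2)) :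
    u + v + w = 0 := by
  have huw : ⟪u, w⟫_ℝ = -(1 / 2) := by rw [real_inner_comm, hwu]
  have hsq : ‖u + v + w‖ ^ 2 = 0 := by
    rw [norm_add_sq_real, norm_add_sq_real, inner_add_left, hu, hv, hw, huv, hvw, huw]
    norm_num
  exact norm_eq_zero.mp (pow_eq_zero_iff two_ne_zero |>.mp hsq)

theorem angle_inv_norm_smul_inv_norm_smul (x y : V) :
    angle (‖x‖⁻¹ • x) (‖y‖⁻¹ • y) = angle x y := by
  rcases eq_or_ne x 0 with rfl | hx
  · simp
  rcases eq_or_ne y 0 with rfl | hy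
  · simp
  rw [angle_smul_left_of_pos _ _ (by positivity), angle_smul_right_of_pos _ _ (by positivity)]

theorem inv_norm_smul_add_add_eq_zero_of_angle_eq {x y z : V} (hx : x ≠ 0) (hy : y ≠ 0)
    (hz : z ≠ 0) (hxy : angle x y = 2 * π / 3) (hyz : angle y z = 2 * π / 3)
    (hzx : angle z x = 2 * π / 3) :
    ‖x‖⁻¹ • x + ‖y‖⁻¹ • y + ‖z‖⁻¹ • z = 0 := by
  have hx₁ := norm_inv_norm_smul_self hx
  have hy₁ := norm_inv_norm_smul_self hy
  have hz₁ := norm_inv_norm_smul_self hz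
  rw [← angle_inv_norm_smul_inv_norm_smul] at hxy hyz hzx
  exact add_add_eq_zero_of_real_inner_eq_neg_half hx₁ hy₁ hz₁
    (real_inner_eq_neg_half_of_angle_eq hx₁ hy₁ hxy)
    (real_inner_eq_neg_half_of_angle_eq hy₁ hz₁ hyz)
    (real_inner_eq_neg_half_of_angle_eq hz₁ hx₁ hzx)

end InnerProductSpace

section Torsor

variable {V Pt : Type*} [NormedAddCommGroup V] [InnerProductSpace ℝ V] [MetricSpace Pt]
  [NormedAddTorsor V Pt]

theorem sum_dist_le_sum_dist_of_sum_inv_norm_smul_eq_zero {ι : Type*} (s : Finset ι)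
    (X : ι → Pt) {O : Pt} (h : ∑ i ∈ s, ‖X i -ᵥ O‖⁻¹ • (X i -ᵥ O) = 0) (P : Pt) :
    ∑ i ∈ s, dist O (X i) ≤ ∑ i ∈ s, dist P (X i) := by
  set d : ι → V := fun i => ‖X i -ᵥ O‖⁻¹ • (X i -ᵥ O)
  have hO : ∀ i, dist O (X i) = ⟪X i -ᵥ P, d i⟫_ℝ + ⟪P -ᵥ O, d i⟫_ℝ := by
    intro i
    rw [← inner_add_left, vsub_add_vsub_cancel, real_inner_inv_norm_smul_self,
      dist_comm, dist_eq_norm_vsub]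
  have hP : ∀ i, ⟪X i -ᵥ P, d i⟫_ℝ ≤ dist P (X i) := fun i =>
    calc ⟪X i -ᵥ P, d i⟫_ℝ ≤ ‖X i -ᵥ P‖ * ‖d i‖ := real_inner_le_norm _ _
      _ ≤ ‖X i -ᵥ P‖ := mul_le_of_le_one_right (norm_nonneg _) (norm_inv_norm_smul_self_le_one _)
      _ = dist P (X i) := by rw [dist_comm, dist_eq_norm_vsub]
  calc ∑ i ∈ s, dist O (X i)
      = ∑ i ∈ s, ⟪X i -ᵥ P, d i⟫_ℝ + ⟪P -ᵥ O, ∑ i ∈ s, d i⟫_ℝ := by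
        rw [Finset.sum_congr rfl fun i _ => hO i, Finset.sum_add_distrib, inner_sum]
    _ = ∑ i ∈ s, ⟪X i -ᵥ P, d i⟫_ℝ := by rw [h, inner_zero_right, add_zero]
    _ ≤ ∑ i ∈ s, dist P (X i) := Finset.sum_le_sum fun i _ => hP i

end Torsor

open EuclideanGeometry

/-- If `O` is a Fermat point of the triangle `ABC` in the Euclidean plane (all three
unsigned angles at `O` equal `2π/3`), then `O` minimizes the total distance to the
three vertices. -/
theorem stmt_6 (A B C O : EuclideanSpace ℝ (Fin 2))
    (hA : O ≠ A) (hB : O ≠ B) (hC : O ≠ C)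
    (h₁ : ∠ A O B = 2 * π / 3) (h₂ : ∠ B O C = 2 * π / 3) (h₃ : ∠ C O A = 2 * π / 3) :
    ∀ P : EuclideanSpace ℝ (Fin 2),
      dist O A + dist O B + dist O C ≤ dist P A + dist P B + dist P C := by
  intro P
  have hdir := inv_norm_smul_add_add_eq_zero_of_angle_eq (vsub_ne_zero.mpr hA.symm)
    (vsub_ne_zero.mpr hB.symm) (vsub_ne_zero.mpr hC.symm) h₁ h₂ h₃
  simpa [Fin.sum_univ_three] using
    sum_dist_le_sum_dist_of_sum_inv_norm_smul_eq_zero Finset.univ ![A, B, C]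
      (by simpa [Fin.sum_univ_three] using hdir) P
end

section
/- Let A, B, C be points of the Euclidean plane (EuclideanSpace ℝ (Fin 2)) with C distinct from A and B, and suppose the (unsigned) angle ∠ACB ≥ 2π/3. Then the vertex C minimizes the total distance to the three vertices: for every point P of the plane, dist(C,A) + dist(C,B) ≤ dist(P,A) + dist(P,B) + dist(P,C). -/
open EuclideanGeometry Real
open scoped InnerProductSpace

/-!
Put `C` at the origin and let `u`, `v` be the unit vectors towards `A` and `B`. Projecting onto
`u` gives `|CA| ≤ |PA| + ⟪CP, u⟫`, and likewise `|CB| ≤ |PB| + ⟪CP, v⟫`. Since the angle between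
`u` and `v` is at least `2π/3`, `⟪u, v⟫ ≤ -1/2`, so `‖u + v‖ ≤ 1` and
`⟪CP, u + v⟫ ≤ |PC|`.
-/


theorem Real.cos_le_neg_half_of_two_pi_div_three_le {θ : ℝ} (h₁ : 2 * π / 3 ≤ θ) (h₂ : θ ≤ π) :
    cos θ ≤ -(1 / 2) := by
  have h : cos (2 * π / 3) = -(1 / 2) := by
    rw [show 2 * π / 3 = π - π / 3 by ring, cos_pi_sub, cos_pi_div_three]
  exact h ▸ cos_le_cos_of_nonneg_of_le_pi (by positivity) h₂ h₁

section InnerProductSpace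

variable {V : Type*} [NormedAddCommGroup V] [InnerProductSpace ℝ V]

theorem norm_le_norm_sub_add_inner_inv_norm_smul (a p : V) :
    ‖a‖ ≤ ‖a - p‖ + ⟪p, ‖a‖⁻¹ • a⟫_ℝ := by
  set u := ‖a‖⁻¹ • a
  have hu : ‖u‖ ≤ 1 := by
    rw [norm_smul, norm_inv, norm_norm]
    exact inv_mul_le_one_of_le₀ le_rfl (norm_nonneg a)
  calc ‖a‖ = ⟪a, u⟫_ℝ := by
        rw [real_inner_smul_right, real_inner_self_eq_norm_sq, sq, ← mul_assoc, inv_mul_mul_self]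
    _ = ⟪a - p, u⟫_ℝ + ⟪p, u⟫_ℝ := by rw [← inner_add_left, sub_add_cancel]
    _ ≤ ‖a - p‖ + ⟪p, u⟫_ℝ := by
        gcongr
        exact (real_inner_le_norm _ _).trans (mul_le_of_le_one_right (norm_nonneg _) hu)

theorem norm_inv_norm_smul_add_inv_norm_smul_le_one {a b : V} (h : 2 * π / 3 ≤ InnerProductGeometry.angle a b) :
    ‖‖a‖⁻¹ • a + ‖b‖⁻¹ • b‖ ≤ 1 := by
  have h_pi_div_two : π / 2 < 2 * π / 3 := by linarith [pi_pos]
  have ha : a ≠ 0 := by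
    rintro rfl
    rw [InnerProductGeometry.angle_zero_left] at h
    linarith
  have hb : b ≠ 0 := by
    rintro rfl
    rw [InnerProductGeometry.angle_zero_right] at h
    linarith
  have hcos := Real.cos_le_neg_half_of_two_pi_div_three_le h (InnerProductGeometry.angle_le_pi a b)
  rw [InnerProductGeometry.cos_angle] at hcos
  have hinner : ⟪‖a‖⁻¹ • a, ‖b‖⁻¹ • b⟫_ℝ = ⟪a, b⟫_ℝ / (‖a‖ * ‖b‖) := by
    rw [real_inner_smul_left, real_inner_smul_right]
    field_simp
  have hsq : ‖‖a‖⁻¹ • a + ‖b‖⁻¹ • b‖ ^ 2 ≤ 1 := by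
    rw [norm_add_sq_real, hinner, norm_smul, norm_smul, norm_inv, norm_inv, norm_norm, norm_norm,
      inv_mul_cancel₀ (norm_ne_zero_iff.mpr ha), inv_mul_cancel₀ (norm_ne_zero_iff.mpr hb)]
    linarith
  exact (sq_le_one_iff₀ (norm_nonneg _)).mp hsq

end InnerProductSpace

theorem EuclideanGeometry.dist_add_dist_le_of_two_pi_div_three_le_angle
    {V Pt : Type*} [NormedAddCommGroup V] [InnerProductSpace ℝ V] [MetricSpace Pt]
    [NormedAddTorsor V Pt] {A B C : Pt} (h : 2 * π / 3 ≤ ∠ A C B) (P : Pt) :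
    dist C A + dist C B ≤ dist P A + dist P B + dist P C := by
  set a := A -ᵥ C
  set b := B -ᵥ C
  set p := P -ᵥ C
  have hA := norm_le_norm_sub_add_inner_inv_norm_smul a p
  have hB := norm_le_norm_sub_add_inner_inv_norm_smul b p
  have hP : ⟪p, ‖a‖⁻¹ • a⟫_ℝ + ⟪p, ‖b‖⁻¹ • b⟫_ℝ ≤ ‖p‖ := by
    rw [← inner_add_right]
    exact (real_inner_le_norm _ _).trans
      (mul_le_of_le_one_right (norm_nonneg _) (norm_inv_norm_smul_add_inv_norm_smul_le_one h))
  rw [vsub_sub_vsub_cancel_right] at hA hB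
  rw [dist_comm C A, dist_comm C B, dist_comm P A, dist_comm P B, dist_eq_norm_vsub V A,
    dist_eq_norm_vsub V B, dist_eq_norm_vsub V A, dist_eq_norm_vsub V B, dist_eq_norm_vsub V P]
  linarith

theorem stmt_7_general (A B C : EuclideanSpace ℝ (Fin 2))
    (h : 2 * π / 3 ≤ ∠ A C B) :
    ∀ P : EuclideanSpace ℝ (Fin 2),
      dist C A + dist C B ≤ dist P A + dist P B + dist P C :=
  dist_add_dist_le_of_two_pi_div_three_le_angle h

/-- If the unsigned angle `∠ A C B` of a triangle `ABC` in the Euclidean plane is at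
least `2π/3`, then the vertex `C` minimizes the total distance to the three vertices. -/
theorem stmt_7 (A B C : EuclideanSpace ℝ (Fin 2))
    (hA : C ≠ A) (hB : C ≠ B) (h : 2 * π / 3 ≤ ∠ A C B) :
    ∀ P : EuclideanSpace ℝ (Fin 2),
      dist C A + dist C B ≤ dist P A + dist P B + dist P C :=
  stmt_7_general A B C h
end

section
/- Let A, B, C be points of the Euclidean plane (EuclideanSpace ℝ (Fin 2)) and set a = dist(B,C), b = dist(A,C), c = dist(A,B). Assume a ≤ b ≤ c and c² < a² + b² + a·b. Then the infimum over all points P of the plane of dist(P,A) + dist(P,B) + dist(P,C) equals √((a² + b² + c² + 4√3·Δ)/2), where s = (a+b+c)/2 and Δ = √(s(s−a)(s−b)(s−c)). -/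
/-!
For every `v : ℂ` with `v ^ 2 + v + 1 = 0` we have
`A + v B + v² C = (A - z) + v (B - z) + v² (C - z)`, so by the triangle inequality
`‖A + v B + v² C‖` is a lower bound for `dist z A + dist z B + dist z C`. The sum of distances
attains its minimum at some `P`. When every angle of the triangle is less than `2π/3`, `P` is not
a vertex: moving away from a vertex against the sum of the two unit vectors pointing to it
decreases the sum. Hence the first-order condition holds at `P`: the unit vectors from `A`, `B`,
`C` to `P` add up to `0`. Three unit vectors with sum `0` are `u, v u, v² u` for a cube root of
unity `v`, and then the sum of distances at `P` is exactly `‖A + v B + v² C‖`.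
Finally `‖A + v B + v² C‖² = (a² + b² + c²) / 2 ∓ √3 · Im (conj (A - C) * (B - C))`, where the
imaginary part is `±2Δ` by Heron's formula; the larger of the two values is the minimum.
-/

section InnerProductSpace

variable {E : Type*} [NormedAddCommGroup E] [InnerProductSpace ℝ E]

theorem hasDerivAt_norm_add_smul {v : E} (hv : v ≠ 0) (d : E) :
    HasDerivAt (fun t : ℝ => ‖v + t • d‖) (inner ℝ v d / ‖v‖) 0 := by
  have hline : HasDerivAt (fun t : ℝ => v + t • d) d 0 := by
    simpa using ((hasDerivAt_id (0 : ℝ)).smul_const d).const_add v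
  have hsqrt := hline.norm_sq.sqrt (by simpa using hv)
  simp only [zero_smul, add_zero, Real.sqrt_sq (norm_nonneg _)] at hsqrt
  convert hsqrt using 1
  field_simp

theorem nonneg_of_hasDerivAt_of_forall_pos_le {g : ℝ → ℝ} {g' : ℝ} (hg : HasDerivAt g g' 0)
    (hmin : ∀ t > 0, g 0 ≤ g t) : 0 ≤ g' := by
  refine ge_of_tendsto hg.tendsto_slope_zero_right ?_
  filter_upwards [self_mem_nhdsWithin] with t (ht : 0 < t)
  simpa only [zero_add, smul_eq_mul] using
    mul_nonneg (inv_nonneg.2 ht.le) (sub_nonneg.2 (hmin t ht))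

/-- With `c = 0` this is the first-order condition at a minimum `P` of `∑ i, ‖z - X i‖`, with
`c = 1` the one at a minimum `P` of `‖z - P‖ + ∑ i, ‖z - X i‖`. -/
theorem norm_sum_unit_le_of_forall_le {ι : Type*} [Fintype ι] {X : ι → E} {P : E}
    (hX : ∀ i, P ≠ X i) {c : ℝ} (hc : 0 ≤ c)
    (hmin : ∀ z, ∑ i, ‖P - X i‖ ≤ c * ‖z - P‖ + ∑ i, ‖z - X i‖) :
    ‖∑ i, ‖P - X i‖⁻¹ • (P - X i)‖ ≤ c := by
  set u := ∑ i, ‖P - X i‖⁻¹ • (P - X i)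
  have hsum : HasDerivAt (fun t : ℝ => ∑ i, ‖(P - X i) + t • -u‖)
      (∑ i, inner ℝ (P - X i) (-u) / ‖P - X i‖) 0 :=
    HasDerivAt.fun_sum fun i _ => hasDerivAt_norm_add_smul (sub_ne_zero.2 (hX i)) (-u)
  have hderiv := (((hasDerivAt_id (0 : ℝ)).mul_const ‖u‖).const_mul c).add hsum
  have hinner : ∑ i, inner ℝ (P - X i) (-u) / ‖P - X i‖ = -‖u‖ ^ 2 :=
    calc ∑ i, inner ℝ (P - X i) (-u) / ‖P - X i‖
        = inner ℝ (∑ i, ‖P - X i‖⁻¹ • (P - X i)) (-u) := by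
          simp only [sum_inner, real_inner_smul_left, div_eq_inv_mul]
      _ = inner ℝ u (-u) := rfl
      _ = -‖u‖ ^ 2 := by rw [inner_neg_right, real_inner_self_eq_norm_sq]
  have hslope := nonneg_of_hasDerivAt_of_forall_pos_le hderiv fun t ht => by
    have h := hmin (P + t • -u)
    rw [add_sub_cancel_left, norm_smul, norm_neg, Real.norm_of_nonneg ht.le] at h
    simpa only [Pi.add_apply, id, zero_mul, mul_zero, zero_smul, add_zero, zero_add,
      add_sub_right_comm P] using h
  rw [one_mul, hinner] at hslope
  nlinarith [norm_nonneg u]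

theorem sum_unit_eq_zero_of_forall_le {ι : Type*} [Fintype ι] {X : ι → E} {P : E}
    (hX : ∀ i, P ≠ X i) (hmin : ∀ z, ∑ i, ‖P - X i‖ ≤ ∑ i, ‖z - X i‖) :
    ∑ i, ‖P - X i‖⁻¹ • (P - X i) = 0 :=
  norm_le_zero_iff.1 <| norm_sum_unit_le_of_forall_le hX le_rfl (by simpa using hmin)

theorem one_lt_norm_unit_add_unit {X Y Z : E} (hY : X ≠ Y) (hZ : X ≠ Z)
    (h : dist Y Z ^ 2 < dist X Y ^ 2 + dist X Z ^ 2 + dist X Y * dist X Z) :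
    1 < ‖‖X - Y‖⁻¹ • (X - Y) + ‖X - Z‖⁻¹ • (X - Z)‖ := by
  have hp : 0 < ‖X - Y‖ := norm_pos_iff.2 (sub_ne_zero.2 hY)
  have hq : 0 < ‖X - Z‖ := norm_pos_iff.2 (sub_ne_zero.2 hZ)
  have hcos : -(‖X - Y‖ * ‖X - Z‖) < 2 * inner ℝ (X - Y) (X - Z) := by
    have hYZ : Y - Z = (X - Z) - (X - Y) := by abel
    rw [dist_eq_norm, dist_eq_norm, dist_eq_norm, hYZ, norm_sub_sq_real, real_inner_comm] at h
    linarith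
  rw [← one_lt_sq_iff₀ (norm_nonneg _), norm_add_sq_real, norm_smul, norm_smul, norm_inv,
    norm_inv, norm_norm, norm_norm, inv_mul_cancel₀ hp.ne', inv_mul_cancel₀ hq.ne',
    real_inner_smul_left, real_inner_smul_right]
  have : -1 < 2 * (‖X - Y‖⁻¹ * (‖X - Z‖⁻¹ * inner ℝ (X - Y) (X - Z))) := by
    rw [show 2 * (‖X - Y‖⁻¹ * (‖X - Z‖⁻¹ * inner ℝ (X - Y) (X - Z)))
        = 2 * inner ℝ (X - Y) (X - Z) / (‖X - Y‖ * ‖X - Z‖) by field_simp,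
      lt_div_iff₀ (by positivity)]
    linarith
  linarith

theorem exists_sum_dist_lt_dist_add_dist {X Y Z : E} (hY : X ≠ Y) (hZ : X ≠ Z)
    (h : dist Y Z ^ 2 < dist X Y ^ 2 + dist X Z ^ 2 + dist X Y * dist X Z) :
    ∃ z, dist z X + dist z Y + dist z Z < dist X Y + dist X Z := by
  by_contra! hmin
  refine (one_lt_norm_unit_add_unit hY hZ h).not_ge ?_
  simpa [Fin.sum_univ_two] using norm_sum_unit_le_of_forall_le (X := ![Y, Z]) (c := 1)
    (by simp [Fin.forall_fin_two, hY, hZ]) zero_le_one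
    (by simpa [Fin.sum_univ_two, dist_eq_norm, add_assoc] using hmin)

end InnerProductSpace

theorem exists_forall_sum_dist_le {α : Type*} [PseudoMetricSpace α] [ProperSpace α]
    (X Y Z : α) :
    ∃ P, ∀ z, dist P X + dist P Y + dist P Z ≤ dist z X + dist z Y + dist z Z := by
  refine Continuous.exists_forall_le' (by fun_prop) X ?_
  filter_upwards [(tendsto_dist_right_cocompact_atTop X).eventually_ge_atTop
    (dist X X + dist X Y + dist X Z)] with z hz
  linarith [dist_nonneg (x := z) (y := Y), dist_nonneg (x := z) (y := Z)]

open ComplexConjugate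

theorem sq_add_add_one_eq_zero_iff {v : ℂ} :
    v ^ 2 + v + 1 = 0 ↔ v.re = -1 / 2 ∧ v.im ^ 2 = 3 / 4 := by
  constructor
  · intro hv
    have hre := congrArg Complex.re hv
    have him := congrArg Complex.im hv
    simp only [sq, Complex.add_re, Complex.mul_re, Complex.one_re, Complex.zero_re, Complex.add_im,
      Complex.mul_im, Complex.one_im, Complex.zero_im] at hre him
    have hre' : v.re = -1 / 2 := by
      rcases mul_eq_zero.1 (show v.im * (2 * v.re + 1) = 0 by linarith) with h | h
      · nlinarith [sq_nonneg (v.re + 1 / 2)]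
      · linarith
    exact ⟨hre', by nlinarith⟩
  · rintro ⟨hre, him⟩
    apply Complex.ext <;> simp only [sq, Complex.add_re, Complex.mul_re, Complex.one_re,
      Complex.zero_re, Complex.add_im, Complex.mul_im, Complex.one_im, Complex.zero_im, hre] <;>
      nlinarith

theorem norm_eq_one_of_sq_add_add_one_eq_zero {v : ℂ} (hv : v ^ 2 + v + 1 = 0) : ‖v‖ = 1 := by
  obtain ⟨hre, him⟩ := sq_add_add_one_eq_zero_iff.1 hv
  rw [← pow_eq_one_iff_of_nonneg (norm_nonneg v) two_ne_zero, Complex.sq_norm,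
    Complex.normSq_apply, hre]
  nlinarith

theorem norm_add_mul_add_sq_mul_le_sum_dist {v : ℂ} (hv : v ^ 2 + v + 1 = 0) (A B C z : ℂ) :
    ‖A + v * B + v ^ 2 * C‖ ≤ dist z A + dist z B + dist z C := by
  have hv1 := norm_eq_one_of_sq_add_add_one_eq_zero hv
  calc ‖A + v * B + v ^ 2 * C‖ = ‖(A - z) + v * (B - z) + v ^ 2 * (C - z)‖ := by
        congr 1; linear_combination z * hv
    _ ≤ ‖A - z‖ + ‖v * (B - z)‖ + ‖v ^ 2 * (C - z)‖ := norm_add₃_le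
    _ = dist z A + dist z B + dist z C := by
        simp only [norm_mul, norm_pow, hv1, one_pow, one_mul, dist_comm z, dist_eq_norm]

theorem exists_sq_add_add_one_eq_zero_of_norm_eq_one {u₁ u₂ u₃ : ℂ} (h₁ : ‖u₁‖ = 1)
    (h₂ : ‖u₂‖ = 1) (h₃ : ‖u₃‖ = 1) (hsum : u₁ + u₂ + u₃ = 0) :
    ∃ v : ℂ, v ^ 2 + v + 1 = 0 ∧ u₂ = v * u₁ ∧ u₃ = v ^ 2 * u₁ := by
  have hu₁ : u₁ ≠ 0 := norm_ne_zero_iff.1 (by rw [h₁]; exact one_ne_zero)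
  set v := u₂ / u₁
  have hv : ‖v‖ = 1 := by rw [norm_div, h₁, h₂, div_one]
  have hsum_div : 1 + v + u₃ / u₁ = 0 := by
    rw [← div_self hu₁, ← add_div, ← add_div, hsum, zero_div]
  have hw : ‖1 + v‖ = 1 := by
    rw [show 1 + v = -(u₃ / u₁) by linear_combination hsum_div, norm_neg, norm_div, h₁, h₃,
      div_one]
  have hroot : v ^ 2 + v + 1 = 0 := by
    have hv' := congrArg (· ^ 2) hv
    have hw' := congrArg (· ^ 2) hw
    simp only [Complex.sq_norm, Complex.normSq_apply, Complex.add_re, Complex.add_im,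
      Complex.one_re, Complex.one_im, one_pow] at hv' hw'
    exact sq_add_add_one_eq_zero_iff.2 ⟨by nlinarith, by nlinarith⟩
  refine ⟨v, hroot, (div_mul_cancel₀ u₂ hu₁).symm, ?_⟩
  linear_combination u₁ * hsum_div - u₁ * hroot - div_mul_cancel₀ u₃ hu₁

theorem conj_smul_inv_norm_mul_self (w : ℂ) : conj (‖w‖⁻¹ • w) * w = ‖w‖ := by
  rcases eq_or_ne w 0 with rfl | hw
  · simp
  rw [Complex.real_smul, map_mul, Complex.conj_ofReal, mul_assoc, Complex.conj_mul']
  have : (‖w‖ : ℂ) ≠ 0 := by exact_mod_cast norm_ne_zero_iff.2 hw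
  push_cast
  field_simp

theorem exists_sum_dist_eq_norm_of_forall_le {A B C P : ℂ} (hA : P ≠ A) (hB : P ≠ B)
    (hC : P ≠ C)
    (hmin : ∀ z, dist P A + dist P B + dist P C ≤ dist z A + dist z B + dist z C) :
    ∃ v : ℂ, v ^ 2 + v + 1 = 0 ∧
      dist P A + dist P B + dist P C = ‖A + v * B + v ^ 2 * C‖ := by
  set u : ℂ → ℂ := fun X => conj (‖P - X‖⁻¹ • (P - X))
  have hstat : u A + u B + u C = 0 := by
    have h := sum_unit_eq_zero_of_forall_le (X := ![A, B, C]) (P := P)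
      (by simp [Fin.forall_fin_succ, hA, hB, hC])
      (by simpa [Fin.sum_univ_three, dist_eq_norm] using hmin)
    simp only [Fin.sum_univ_three, Matrix.cons_val] at h
    simp only [u, ← map_add, h, map_zero]
  have hnorm : ∀ X, P ≠ X → ‖u X‖ = 1 := fun X hX => by
    simp only [u, Complex.norm_conj]
    exact norm_smul_inv_norm (sub_ne_zero.2 hX)
  obtain ⟨v, hv, hvB, hvC⟩ :=
    exists_sq_add_add_one_eq_zero_of_norm_eq_one (hnorm A hA) (hnorm B hB) (hnorm C hC) hstat
  have hsum : ((dist P A + dist P B + dist P C : ℝ) : ℂ) = -u A * (A + v * B + v ^ 2 * C) := by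
    simp only [dist_eq_norm, Complex.ofReal_add, ← conj_smul_inv_norm_mul_self]
    change u A * (P - A) + u B * (P - B) + u C * (P - C) = _
    rw [hvB, hvC]
    linear_combination u A * P * hv
  refine ⟨v, hv, ?_⟩
  rw [← Complex.norm_of_nonneg (by positivity : 0 ≤ dist P A + dist P B + dist P C), hsum,
    norm_mul, norm_neg, hnorm A hA, one_mul]

theorem norm_add_mul_add_sq_mul_sq {v : ℂ} (hv : v ^ 2 + v + 1 = 0) (A B C : ℂ) :
    ‖A + v * B + v ^ 2 * C‖ ^ 2 = (dist B C ^ 2 + dist A C ^ 2 + dist A B ^ 2) / 2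
      - 2 * v.im * (conj (A - C) * (B - C)).im := by
  obtain ⟨hre, him⟩ := sq_add_add_one_eq_zero_iff.1 hv
  rw [show A + v * B + v ^ 2 * C = (A - C) + v * (B - C) by linear_combination C * hv]
  simp only [dist_eq_norm, Complex.sq_norm, Complex.normSq_apply, Complex.add_re, Complex.add_im,
    Complex.sub_re, Complex.sub_im, Complex.mul_re, Complex.mul_im, Complex.conj_re,
    Complex.conj_im, hre]
  linear_combination ((B.re - C.re) ^ 2 + (B.im - C.im) ^ 2) * him

theorem norm_add_mul_add_sq_mul_sq_le {v : ℂ} (hv : v ^ 2 + v + 1 = 0) (A B C : ℂ) :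
    ‖A + v * B + v ^ 2 * C‖ ^ 2 ≤ (dist B C ^ 2 + dist A C ^ 2 + dist A B ^ 2) / 2
      + √3 * |(conj (A - C) * (B - C)).im| := by
  have habs : |2 * v.im| = √3 := by
    rw [← Real.sqrt_sq_eq_abs, mul_pow, (sq_add_add_one_eq_zero_iff.1 hv).2]
    norm_num
  rw [norm_add_mul_add_sq_mul_sq hv, ← habs, ← abs_mul]
  linarith [neg_abs_le (2 * v.im * (conj (A - C) * (B - C)).im)]

theorem exists_norm_add_mul_add_sq_mul_sq_eq (A B C : ℂ) :
    ∃ v : ℂ, v ^ 2 + v + 1 = 0 ∧ ‖A + v * B + v ^ 2 * C‖ ^ 2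
      = (dist B C ^ 2 + dist A C ^ 2 + dist A B ^ 2) / 2
        + √3 * |(conj (A - C) * (B - C)).im| := by
  have h3 : (√3 / 2) ^ 2 = 3 / 4 := by rw [div_pow, Real.sq_sqrt (by norm_num)]; norm_num
  rcases le_total 0 (conj (A - C) * (B - C)).im with hY | hY
  · have hv : (⟨-1 / 2, -(√3 / 2)⟩ : ℂ) ^ 2 + ⟨-1 / 2, -(√3 / 2)⟩ + 1 = 0 :=
      sq_add_add_one_eq_zero_iff.2 ⟨rfl, by rw [neg_sq, h3]⟩
    refine ⟨_, hv, ?_⟩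
    rw [norm_add_mul_add_sq_mul_sq hv, abs_of_nonneg hY]
    ring
  · have hv : (⟨-1 / 2, √3 / 2⟩ : ℂ) ^ 2 + ⟨-1 / 2, √3 / 2⟩ + 1 = 0 :=
      sq_add_add_one_eq_zero_iff.2 ⟨rfl, h3⟩
    refine ⟨_, hv, ?_⟩
    rw [norm_add_mul_add_sq_mul_sq hv, abs_of_nonpos hY]
    ring

theorem sqrt_heron_eq_abs_im_div_two (A B C : ℂ) {a b c s : ℝ} (ha : a = dist B C)
    (hb : b = dist A C) (hc : c = dist A B) (hs : s = (a + b + c) / 2) :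
    √(s * (s - a) * (s - b) * (s - c)) = |(conj (A - C) * (B - C)).im| / 2 := by
  have hsq : ∀ X Y : ℂ, dist X Y ^ 2 = (X.re - Y.re) ^ 2 + (X.im - Y.im) ^ 2 := fun X Y => by
    rw [dist_eq_norm, Complex.sq_norm, Complex.normSq_apply, Complex.sub_re, Complex.sub_im]
    ring
  have heron : s * (s - a) * (s - b) * (s - c) = ((conj (A - C) * (B - C)).im / 2) ^ 2 := by
    rw [show s * (s - a) * (s - b) * (s - c)
        = (4 * a ^ 2 * b ^ 2 - (a ^ 2 + b ^ 2 - c ^ 2) ^ 2) / 16 by rw [hs]; ring,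
      ha, hb, hc, hsq, hsq, hsq]
    simp only [Complex.mul_im, Complex.conj_re, Complex.conj_im, Complex.sub_re, Complex.sub_im]
    ring
  rw [heron, Real.sqrt_sq_eq_abs, abs_div, abs_two]

theorem isLeast_sum_dist {A B C : ℂ} (hAB : A ≠ B) (hAC : A ≠ C) (hBC : B ≠ C)
    (hA : dist B C ^ 2 < dist A B ^ 2 + dist A C ^ 2 + dist A B * dist A C)
    (hB : dist A C ^ 2 < dist B A ^ 2 + dist B C ^ 2 + dist B A * dist B C)
    (hC : dist A B ^ 2 < dist C A ^ 2 + dist C B ^ 2 + dist C A * dist C B) :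
    IsLeast (Set.range fun z => dist z A + dist z B + dist z C)
      √((dist B C ^ 2 + dist A C ^ 2 + dist A B ^ 2) / 2
        + √3 * |(conj (A - C) * (B - C)).im|) := by
  obtain ⟨P, hP⟩ := exists_forall_sum_dist_le A B C
  have hPA : P ≠ A := by
    rintro rfl
    obtain ⟨z, hz⟩ := exists_sum_dist_lt_dist_add_dist hAB hAC hA
    linarith [hP z, dist_self P]
  have hPB : P ≠ B := by
    rintro rfl
    obtain ⟨z, hz⟩ := exists_sum_dist_lt_dist_add_dist hAB.symm hBC hB
    linarith [hP z, dist_self P, dist_comm A P]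
  have hPC : P ≠ C := by
    rintro rfl
    obtain ⟨z, hz⟩ := exists_sum_dist_lt_dist_add_dist hAC.symm hBC.symm hC
    linarith [hP z, dist_self P, dist_comm A P, dist_comm B P]
  obtain ⟨v, hv, hPv⟩ := exists_sum_dist_eq_norm_of_forall_le hPA hPB hPC hP
  obtain ⟨w, hw, hw_eq⟩ := exists_norm_add_mul_add_sq_mul_sq_eq A B C
  have hval : dist P A + dist P B + dist P C = √((dist B C ^ 2 + dist A C ^ 2 + dist A B ^ 2) / 2
      + √3 * |(conj (A - C) * (B - C)).im|) := by
    refine le_antisymm ?_ ?_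
    · rw [hPv]
      exact Real.le_sqrt_of_sq_le (norm_add_mul_add_sq_mul_sq_le hv A B C)
    · rw [← hw_eq, Real.sqrt_sq (norm_nonneg _)]
      exact norm_add_mul_add_sq_mul_le_sum_dist hw A B C P
  exact ⟨⟨P, hval⟩, by rintro _ ⟨z, rfl⟩; exact hval ▸ hP z⟩

/-- For a triangle `ABC` in the Euclidean plane with side lengths
`a = dist B C ≤ b = dist A C ≤ c = dist A B` and `c² < a² + b² + a·b`, the infimum over
all points `P` of `dist P A + dist P B + dist P C` equals
`√((a² + b² + c² + 4√3·Δ)/2)` where `s = (a+b+c)/2` and `Δ = √(s(s−a)(s−b)(s−c))`. -/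
theorem stmt_8 (A B C : EuclideanSpace ℝ (Fin 2)) (a b c s Δ : ℝ)
    (ha : a = dist B C) (hb : b = dist A C) (hc : c = dist A B)
    (hab : a ≤ b) (hbc : b ≤ c) (hlt : c ^ 2 < a ^ 2 + b ^ 2 + a * b)
    (hs : s = (a + b + c) / 2)
    (hΔ : Δ = Real.sqrt (s * (s - a) * (s - b) * (s - c))) :
    (⨅ P : EuclideanSpace ℝ (Fin 2), (dist P A + dist P B + dist P C)) =
      Real.sqrt ((a ^ 2 + b ^ 2 + c ^ 2 + 4 * Real.sqrt 3 * Δ) / 2) := by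
  let e := Complex.orthonormalBasisOneI.repr
  have hdist : ∀ x y, dist (e.symm x) (e.symm y) = dist x y := e.symm.dist_map
  have hinf : (⨅ P, dist P A + dist P B + dist P C)
      = ⨅ z : ℂ, dist z (e.symm A) + dist z (e.symm B) + dist z (e.symm C) := by
    rw [← e.toEquiv.iInf_comp]
    refine iInf_congr fun z => ?_
    simp only [← hdist, LinearEquiv.coe_toEquiv, LinearIsometryEquiv.coe_toLinearEquiv,
      LinearIsometryEquiv.symm_apply_apply]
  rw [← hdist] at ha hb hc
  have ha0 : 0 < a := by
    by_contra! h
    nlinarith [ha ▸ dist_nonneg]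
  have hleast := isLeast_sum_dist (A := e.symm A) (B := e.symm B) (C := e.symm C)
    (dist_pos.1 (by linarith)) (dist_pos.1 (by linarith)) (dist_pos.1 (by linarith))
    (by rw [← ha, ← hb, ← hc]; nlinarith)
    (by rw [dist_comm (e.symm B), ← ha, ← hb, ← hc]; nlinarith)
    (by rw [dist_comm (e.symm C), dist_comm (e.symm C), ← ha, ← hb, ← hc]; nlinarith)
  rw [hinf, hleast.isGLB.ciInf_eq, hΔ, sqrt_heron_eq_abs_im_div_two _ _ _ ha hb hc hs,
    ← ha, ← hb, ← hc]
  ring_nf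
end

section
/- Let a, b, c, x, y, z be real numbers satisfying the spherical Fermat-point equations cos a = cos y·cos z − (1/2)·sin y·sin z, cos b = cos x·cos z − (1/2)·sin x·sin z, and cos c = cos x·cos y − (1/2)·sin x·sin y. Set X = sin x, Y = sin y, Z = sin z, u = cos a, v = cos b, w = cos c, and D = 4u² + 4v² + 4w² − 8uvw. Then the following three polynomial equations hold: (3u²+1)X² + (3v²+1)Y² + (6uv−2w)XY − 3X²Y² + 4w² = D; (3u²+1)X² + (3w²+1)Z² + (6uw−2v)XZ − 3X²Z² + 4v² = D; (3v²+1)Y² + (3w²+1)Z² + (6vw−2u)YZ − 3Y²Z² + 4u² = D. -/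
open Real

/-- The spherical Fermat-point equations imply the system of multivariate polynomial
equations of Proposition 3.1. -/
theorem stmt_9 (a b c x y z : ℝ)
    (ha : cos a = cos y * cos z - (1 / 2) * sin y * sin z)
    (hb : cos b = cos x * cos z - (1 / 2) * sin x * sin z)
    (hc : cos c = cos x * cos y - (1 / 2) * sin x * sin y)
    (X Y Z u v w D : ℝ)
    (hX : X = sin x) (hY : Y = sin y) (hZ : Z = sin z)
    (hu : u = cos a) (hv : v = cos b) (hw : w = cos c)
    (hD : D = 4 * u ^ 2 + 4 * v ^ 2 + 4 * w ^ 2 - 8 * u * v * w) :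
    (3 * u ^ 2 + 1) * X ^ 2 + (3 * v ^ 2 + 1) * Y ^ 2 + (6 * u * v - 2 * w) * X * Y
        - 3 * X ^ 2 * Y ^ 2 + 4 * w ^ 2 = D ∧
    (3 * u ^ 2 + 1) * X ^ 2 + (3 * w ^ 2 + 1) * Z ^ 2 + (6 * u * w - 2 * v) * X * Z
        - 3 * X ^ 2 * Z ^ 2 + 4 * v ^ 2 = D ∧
    (3 * v ^ 2 + 1) * Y ^ 2 + (3 * w ^ 2 + 1) * Z ^ 2 + (6 * v * w - 2 * u) * Y * Z
        - 3 * Y ^ 2 * Z ^ 2 + 4 * u ^ 2 = D := by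
  subst hX hY hZ hu hv hw hD
  rw [ha, hb, hc]
  refine ⟨?_, ?_, ?_⟩
  · linear_combination
      (-4*Real.cos z ^ 2 + 3*Real.cos z ^ 2*Real.sin y ^ 2 - 4*Real.cos y*Real.cos z*Real.sin y*Real.sin z + 8*Real.cos y ^ 2*Real.cos z ^ 2) * (Real.sin_sq_add_cos_sq x) +
      (4*Real.cos z ^ 2 - 5*Real.cos z ^ 2*Real.sin x ^ 2 - 4*Real.cos x*Real.cos z*Real.sin x*Real.sin z) * (Real.sin_sq_add_cos_sq y) +
      (-1*Real.sin y ^ 2 - 1*Real.sin x ^ 2 + 2*Real.sin x ^ 2*Real.sin y ^ 2 + 2*Real.cos x*Real.cos y*Real.sin x*Real.sin y) * (Real.sin_sq_add_cos_sq z)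
  · linear_combination
      (-4*Real.cos y*Real.cos z*Real.sin y*Real.sin z - 4*Real.cos y ^ 2 + 3*Real.cos y ^ 2*Real.sin z ^ 2 + 8*Real.cos y ^ 2*Real.cos z ^ 2) * (Real.sin_sq_add_cos_sq x) +
      (-4 + 3*Real.sin z ^ 2 + 4*Real.sin x ^ 2 - 3*Real.sin x ^ 2*Real.sin z ^ 2 + 4*Real.cos z ^ 2 - 5*Real.cos z ^ 2*Real.sin x ^ 2 + 2*Real.cos x*Real.cos z*Real.sin x*Real.sin z) * (Real.sin_sq_add_cos_sq y) +
      (4 - 4*Real.sin y ^ 2 - 5*Real.sin x ^ 2 + 5*Real.sin x ^ 2*Real.sin y ^ 2 - 4*Real.cos x*Real.cos y*Real.sin x*Real.sin y) * (Real.sin_sq_add_cos_sq z)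
  · linear_combination
      (-4*Real.cos z ^ 2 + 3*Real.cos z ^ 2*Real.sin y ^ 2 + 2*Real.cos y*Real.cos z*Real.sin y*Real.sin z - 4*Real.cos y ^ 2 + 3*Real.cos y ^ 2*Real.sin z ^ 2 + 8*Real.cos y ^ 2*Real.cos z ^ 2) * (Real.sin_sq_add_cos_sq x) +
      (-4 + 3*Real.sin z ^ 2 + 4*Real.sin x ^ 2 - 3*Real.sin x ^ 2*Real.sin z ^ 2 + 8*Real.cos z ^ 2 - 8*Real.cos z ^ 2*Real.sin x ^ 2 - 4*Real.cos x*Real.cos z*Real.sin x*Real.sin z) * (Real.sin_sq_add_cos_sq y) +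
      (4 - 5*Real.sin y ^ 2 - 4*Real.sin x ^ 2 + 5*Real.sin x ^ 2*Real.sin y ^ 2 - 4*Real.cos x*Real.cos y*Real.sin x*Real.sin y) * (Real.sin_sq_add_cos_sq z)
end

section
/- Let a, b, c, x, y, z be real numbers satisfying the hyperbolic Fermat-point equations cosh a = cosh y·cosh z + (1/2)·sinh y·sinh z, cosh b = cosh x·cosh z + (1/2)·sinh x·sinh z, and cosh c = cosh x·cosh y + (1/2)·sinh x·sinh y. Set X = sinh x, Y = sinh y, Z = sinh z, u = cosh a, v = cosh b, w = cosh c, and D = 4u² + 4v² + 4w² − 8uvw. Then the following three polynomial equations hold: (3u²+1)X² + (3v²+1)Y² + (6uv−2w)XY + 3X²Y² − 4w² + D = 0; (3u²+1)X² + (3w²+1)Z² + (6uw−2v)XZ + 3X²Z² − 4v² + D = 0; (3v²+1)Y² + (3w²+1)Z² + (6vw−2u)YZ + 3Y²Z² − 4u² + D = 0. -/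
open Real

/-- The hyperbolic Fermat-point equations imply the system of multivariate polynomial
equations of Proposition 3.2. -/
theorem stmt_10 (a b c x y z : ℝ)
    (ha : cosh a = cosh y * cosh z + (1 / 2) * sinh y * sinh z)
    (hb : cosh b = cosh x * cosh z + (1 / 2) * sinh x * sinh z)
    (hc : cosh c = cosh x * cosh y + (1 / 2) * sinh x * sinh y)
    (X Y Z u v w D : ℝ)
    (hX : X = sinh x) (hY : Y = sinh y) (hZ : Z = sinh z)
    (hu : u = cosh a) (hv : v = cosh b) (hw : w = cosh c)
    (hD : D = 4 * u ^ 2 + 4 * v ^ 2 + 4 * w ^ 2 - 8 * u * v * w) :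
    (3 * u ^ 2 + 1) * X ^ 2 + (3 * v ^ 2 + 1) * Y ^ 2 + (6 * u * v - 2 * w) * X * Y
        + 3 * X ^ 2 * Y ^ 2 - 4 * w ^ 2 + D = 0 ∧
    (3 * u ^ 2 + 1) * X ^ 2 + (3 * w ^ 2 + 1) * Z ^ 2 + (6 * u * w - 2 * v) * X * Z
        + 3 * X ^ 2 * Z ^ 2 - 4 * v ^ 2 + D = 0 ∧
    (3 * v ^ 2 + 1) * Y ^ 2 + (3 * w ^ 2 + 1) * Z ^ 2 + (6 * v * w - 2 * u) * Y * Z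
        + 3 * Y ^ 2 * Z ^ 2 - 4 * u ^ 2 + D = 0 := by
  subst hX hY hZ hu hv hw hD
  have hP : cosh x ^ 2 = 1 + sinh x ^ 2 := cosh_sq' x
  have hQ : cosh y ^ 2 = 1 + sinh y ^ 2 := cosh_sq' y
  have hR : cosh z ^ 2 = 1 + sinh z ^ 2 := cosh_sq' z
  set P := cosh x; set Q := cosh y; set R := cosh z
  set X := sinh x; set Y := sinh y; set Z := sinh z
  rw [ha, hb, hc]
  refine ⟨?_, ?_, ?_⟩
  · linear_combination (4*R^2 + 3*R^2*Y^2 - 4*Q*R*Y*Z - 8*Q^2*R^2) * hP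
      + (-4*R^2 - 5*R^2*X^2 - 4*P*R*X*Z) * hQ
      + (-Y^2 - X^2 - 2*X^2*Y^2 + 2*P*Q*X*Y) * hR
  · linear_combination (-4*Q*R*Y*Z + 4*Q^2 + 3*Q^2*Z^2 - 8*Q^2*R^2) * hP
      + (4 + 3*Z^2 + 4*X^2 + 3*X^2*Z^2 - 4*R^2 - 5*R^2*X^2 + 2*P*R*X*Z) * hQ
      + (-4 - 4*Y^2 - 5*X^2 - 5*X^2*Y^2 - 4*P*Q*X*Y) * hR
  · linear_combination (4*R^2 + 3*R^2*Y^2 + 2*Q*R*Y*Z + 4*Q^2 + 3*Q^2*Z^2 - 8*Q^2*R^2) * hP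
      + (4 + 3*Z^2 + 4*X^2 + 3*X^2*Z^2 - 8*R^2 - 8*R^2*X^2 - 4*P*R*X*Z) * hQ
      + (-4 - 5*Y^2 - 4*X^2 - 5*X^2*Y^2 - 4*P*Q*X*Y) * hR
end

section
/- Let p, q, c, t, m, n be real numbers and set r = p + q. Assume sin r ≠ 0, cos m = cos c·cos p + sin c·sin p·t, and cos n = cos c·cos r + sin c·sin r·t. Then cos m = cos c·(sin q / sin r) + cos n·(sin p / sin r). -/
open Real

/-- The spherical transfer identity: if `r = p + q`, `sin r ≠ 0`,
`cos m = cos c·cos p + sin c·sin p·t` and `cos n = cos c·cos r + sin c·sin r·t`, then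
`cos m = cos c·(sin q / sin r) + cos n·(sin p / sin r)`. -/
theorem stmt_13 (p q c t m n : ℝ) (r : ℝ) (hr : r = p + q)
    (hsr : sin r ≠ 0)
    (hm : cos m = cos c * cos p + sin c * sin p * t)
    (hn : cos n = cos c * cos r + sin c * sin r * t) :
    cos m = cos c * (sin q / sin r) + cos n * (sin p / sin r) := by
  subst hr
  rw [hm, hn]
  field_simp
  simp only [sin_add, cos_add]
  linear_combination cos c * sin q * (sin_sq_add_cos_sq p)
end

section
/- Let p, q, c, t, m, n be real numbers and set r = p + q. Assume sinh r ≠ 0, cosh m = cosh c·cosh p − sinh c·sinh p·t, and cosh n = cosh c·cosh r − sinh c·sinh r·t. Then cosh m = cosh c·(sinh q / sinh r) + cosh n·(sinh p / sinh r). -/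
open Real

/-- The hyperbolic transfer identity: if `r = p + q`, `sinh r ≠ 0`,
`cosh m = cosh c·cosh p − sinh c·sinh p·t` and `cosh n = cosh c·cosh r − sinh c·sinh r·t`,
then `cosh m = cosh c·(sinh q / sinh r) + cosh n·(sinh p / sinh r)`. -/
theorem stmt_14 (p q c t m n : ℝ) (r : ℝ) (hr : r = p + q)
    (hsr : sinh r ≠ 0)
    (hm : cosh m = cosh c * cosh p - sinh c * sinh p * t)
    (hn : cosh n = cosh c * cosh r - sinh c * sinh r * t) :
    cosh m = cosh c * (sinh q / sinh r) + cosh n * (sinh p / sinh r) := by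
  subst hr
  rw [hm, hn]
  field_simp
  rw [sinh_add, cosh_add]
  linear_combination cosh c * sinh q * Real.cosh_sq p
end

section
/- Let a, b be real numbers with 0 < a ≤ b. Then for every x with 0 < x < π/b, the second derivative of the function x ↦ sin(a·x)/sin(b·x) at x is nonnegative; equivalently, it equals (sin(a·x)/sin(b·x)) · [ (b·cot(b·x) − a·cot(a·x))² + b²/sin²(b·x) − a²/sin²(a·x) ] ≥ 0. -/
/-!
With `f t = sin (a t) / sin (b t)`, the logarithmic derivative is `L = a cot (a·) - b cot (b·)`,
so `f'' = f (L² + L')` with `L' = b² / sin² (b·) - a² / sin² (a·)`. The latter is nonnegative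
because `t ↦ t / sin t` is increasing on `(0, π)`, which is the concavity of `sin`.
-/

open Real Topology

lemma hasDerivAt_sin_mul (c t : ℝ) : HasDerivAt (fun t => sin (c * t)) (c * cos (c * t)) t := by
  simpa [mul_comm] using ((hasDerivAt_id t).const_mul c).sin

lemma hasDerivAt_cos_mul (c t : ℝ) : HasDerivAt (fun t => cos (c * t)) (-(c * sin (c * t))) t := by
  simpa [mul_comm] using ((hasDerivAt_id t).const_mul c).cos

lemma hasDerivAt_mul_cot_mul {c t : ℝ} (h : sin (c * t) ≠ 0) :
    HasDerivAt (fun t => c * (cos (c * t) / sin (c * t))) (-(c ^ 2 / sin (c * t) ^ 2)) t := by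
  refine (((hasDerivAt_cos_mul c t).div (hasDerivAt_sin_mul c t) h).const_mul c).congr_deriv ?_
  field_simp
  linear_combination (-c ^ 2) * sin_sq_add_cos_sq (c * t)

lemma hasDerivAt_sin_mul_div_sin_mul {a b t : ℝ} (ha : sin (a * t) ≠ 0) (hb : sin (b * t) ≠ 0) :
    HasDerivAt (fun t => sin (a * t) / sin (b * t))
      (sin (a * t) / sin (b * t) *
        (a * (cos (a * t) / sin (a * t)) - b * (cos (b * t) / sin (b * t)))) t := by
  refine ((hasDerivAt_sin_mul a t).div (hasDerivAt_sin_mul b t) hb).congr_deriv ?_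
  -- otherwise `field_simp` normalizes `sin (b * t)` to `sin (t * b)` and no longer sees `hb`
  generalize sin (a * t) = sa at ha ⊢
  generalize sin (b * t) = sb at hb ⊢
  field_simp

lemma iteratedDeriv_two_sin_mul_div_sin_mul {a b x : ℝ} (ha : sin (a * x) ≠ 0)
    (hb : sin (b * x) ≠ 0) :
    iteratedDeriv 2 (fun t => sin (a * t) / sin (b * t)) x =
      (sin (a * x) / sin (b * x)) *
        ((b * (cos (b * x) / sin (b * x)) - a * (cos (a * x) / sin (a * x))) ^ 2 +
          b ^ 2 / sin (b * x) ^ 2 - a ^ 2 / sin (a * x) ^ 2) := by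
  set L : ℝ → ℝ := fun t => a * (cos (a * t) / sin (a * t)) - b * (cos (b * t) / sin (b * t))
  have hderiv : deriv (fun t => sin (a * t) / sin (b * t)) =ᶠ[𝓝 x]
      fun t => sin (a * t) / sin (b * t) * L t := by
    have hopen : IsOpen {t : ℝ | sin (a * t) ≠ 0 ∧ sin (b * t) ≠ 0} :=
      (isOpen_ne_fun (by fun_prop) continuous_const).inter
        (isOpen_ne_fun (by fun_prop) continuous_const)
    filter_upwards [hopen.mem_nhds ⟨ha, hb⟩] with t ht
    exact (hasDerivAt_sin_mul_div_sin_mul ht.1 ht.2).deriv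
  have hL : HasDerivAt L (-(a ^ 2 / sin (a * x) ^ 2) - -(b ^ 2 / sin (b * x) ^ 2)) x :=
    (hasDerivAt_mul_cot_mul ha).sub (hasDerivAt_mul_cot_mul hb)
  rw [iteratedDeriv_succ, iteratedDeriv_one, hderiv.deriv_eq]
  refine ((hasDerivAt_sin_mul_div_sin_mul ha hb).mul hL).deriv.trans ?_
  ring

lemma mul_sin_le_mul_sin {s t : ℝ} (hs : 0 ≤ s) (hst : s ≤ t) (ht : t ≤ π) :
    s * sin t ≤ t * sin s := by
  rcases hs.eq_or_lt with rfl | hs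
  · simp
  have htpos : 0 < t := hs.trans_le hst
  have hchord := strictConcaveOn_sin_Icc.concaveOn.2 ⟨le_rfl, pi_pos.le⟩ ⟨htpos.le, ht⟩
    (sub_nonneg.2 ((div_le_one htpos).2 hst)) (div_nonneg hs.le htpos.le) (by ring)
  simp only [smul_eq_mul, sin_zero, mul_zero, zero_add, div_mul_cancel₀ s htpos.ne'] at hchord
  rw [div_mul_eq_mul_div, div_le_iff₀ htpos] at hchord
  linarith

/-- For `0 < a ≤ b` and `0 < x < π/b`, the second derivative of
`x ↦ sin(a·x)/sin(b·x)` at `x` equals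
`(sin(a·x)/sin(b·x)) · [(b·cot(b·x) − a·cot(a·x))² + b²/sin²(b·x) − a²/sin²(a·x)]`
and is nonnegative. -/
theorem stmt_15 (a b : ℝ) (ha : 0 < a) (hab : a ≤ b) :
    ∀ x : ℝ, 0 < x → x < π / b →
      iteratedDeriv 2 (fun t => sin (a * t) / sin (b * t)) x =
        (sin (a * x) / sin (b * x)) *
          ((b * (cos (b * x) / sin (b * x)) - a * (cos (a * x) / sin (a * x))) ^ 2 +
            b ^ 2 / sin (b * x) ^ 2 - a ^ 2 / sin (a * x) ^ 2) ∧
      0 ≤ iteratedDeriv 2 (fun t => sin (a * t) / sin (b * t)) x := by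
  intro x hx hxb
  have hb : 0 < b := ha.trans_le hab
  have hbx : b * x < π := by rwa [lt_div_iff₀ hb, mul_comm] at hxb
  have hax : a * x ≤ b * x := mul_le_mul_of_nonneg_right hab hx.le
  have hsa : 0 < sin (a * x) := sin_pos_of_pos_of_lt_pi (by positivity) (hax.trans_lt hbx)
  have hsb : 0 < sin (b * x) := sin_pos_of_pos_of_lt_pi (by positivity) hbx
  have hformula := iteratedDeriv_two_sin_mul_div_sin_mul hsa.ne' hsb.ne'
  have hmono : a / sin (a * x) ≤ b / sin (b * x) := by
    rw [div_le_div_iff₀ hsa hsb]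
    have := mul_sin_le_mul_sin (mul_pos ha hx).le hax hbx.le
    nlinarith
  have hsq : a ^ 2 / sin (a * x) ^ 2 ≤ b ^ 2 / sin (b * x) ^ 2 := by
    rw [← div_pow, ← div_pow]
    exact pow_le_pow_left₀ (by positivity) hmono 2
  refine ⟨hformula, hformula ▸ mul_nonneg (by positivity) ?_⟩
  linarith [sq_nonneg (b * (cos (b * x) / sin (b * x)) - a * (cos (a * x) / sin (a * x)))]
end

section
/- Let a, b be real numbers with 0 < a ≤ b ≤ 1.3877. Then for every x with 0 < x ≤ 1, the second derivative of the function x ↦ sinh(a·x)/sinh(b·x) at x is nonpositive. -/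
/-! The logarithmic derivative of `f x = sinh (a x) / sinh (b x)` is
`a coth (a x) - b coth (b x)`, so `f'' = f * g` with
`g x = 2 b coth (b x) (b coth (b x) - a coth (a x)) + a² - b²`. Writing `u = a x ≤ v = b x` and
`φ s = s coth s`, we get `x² g x = 2 φ(v) (φ(v) - φ(u)) - (v² - u²)`, so it suffices that
`2 φ(v) (φ(v) - φ(u)) ≤ v² - u²` for `0 < u ≤ v ≤ 1.3877`. This follows from
`φ(v) ≤ 1 + v²/3 - v⁴/60` and `φ' ≤ (s²/3 - s⁴/64)'`, both obtained from Taylor bounds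
for `sinh` and `cosh` on `[0, 1.3877]`, whose remainders are controlled by
`cosh 1.3877 ≤ 2.4`. -/

open Real Nat

theorem le_on_Icc_of_hasDerivAt_le {f g f' g' : ℝ → ℝ} {a b : ℝ}
    (hf : ∀ t ∈ Set.Icc a b, HasDerivAt f (f' t) t)
    (hg : ∀ t ∈ Set.Icc a b, HasDerivAt g (g' t) t)
    (ha : f a ≤ g a) (hd : ∀ t ∈ Set.Ico a b, f' t ≤ g' t) :
    ∀ x ∈ Set.Icc a b, f x ≤ g x :=
  image_le_of_deriv_right_le_deriv_boundary
    (fun t ht => (hf t ht).continuousAt.continuousWithinAt)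
    (fun t ht => (hf t (Set.Ico_subset_Icc_self ht)).hasDerivWithinAt) ha
    (fun t ht => (hg t ht).continuousAt.continuousWithinAt)
    (fun t ht => (hg t (Set.Ico_subset_Icc_self ht)).hasDerivWithinAt) hd

theorem hasDerivAt_pow_succ_div_factorial (m : ℕ) (x : ℝ) :
    HasDerivAt (fun t : ℝ => t ^ (m + 1) / (m + 1)!) (x ^ m / m !) x := by
  refine ((hasDerivAt_pow (m + 1) x).div_const _).congr_deriv ?_
  rw [Nat.factorial_succ]
  push_cast
  field_simp

noncomputable def coshTaylor (n : ℕ) (x : ℝ) : ℝ :=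
  ∑ k ∈ Finset.range n, x ^ (2 * k) / (2 * k)!

noncomputable def sinhTaylor (n : ℕ) (x : ℝ) : ℝ :=
  ∑ k ∈ Finset.range n, x ^ (2 * k + 1) / (2 * k + 1)!

theorem hasDerivAt_sinhTaylor (n : ℕ) (x : ℝ) :
    HasDerivAt (sinhTaylor n) (coshTaylor n x) x := by
  unfold sinhTaylor coshTaylor
  exact HasDerivAt.fun_sum fun k _ => hasDerivAt_pow_succ_div_factorial (2 * k) x

theorem hasDerivAt_coshTaylor_succ (n : ℕ) (x : ℝ) :
    HasDerivAt (coshTaylor (n + 1)) (sinhTaylor n x) x := by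
  have h : coshTaylor (n + 1) = fun t : ℝ =>
      ∑ k ∈ Finset.range n, t ^ (2 * k + 1 + 1) / ((2 * k + 1 + 1)! : ℝ) + 1 := by
    ext t; simp [coshTaylor, Finset.sum_range_succ', Nat.mul_succ]
  rw [h]
  exact (HasDerivAt.fun_sum fun k _ => hasDerivAt_pow_succ_div_factorial (2 * k + 1) x).add_const 1

theorem sinhTaylor_le_sinh (n : ℕ) {x : ℝ} (hx : 0 ≤ x) : sinhTaylor n x ≤ sinh x :=
  sum_le_hasSum (Finset.range n) (fun k _ => by positivity) (Real.hasSum_sinh x)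

section TaylorUpperBound

variable {C r : ℝ} {n : ℕ}

theorem sinh_le_sinhTaylor_add_of_cosh_le
    (h : ∀ t ∈ Set.Icc 0 r, cosh t ≤ coshTaylor n t + C * (t ^ (2 * n) / (2 * n)!)) :
    ∀ x ∈ Set.Icc 0 r, sinh x ≤ sinhTaylor n x + C * (x ^ (2 * n + 1) / (2 * n + 1)!) := by
  refine le_on_Icc_of_hasDerivAt_le (fun t _ => hasDerivAt_sinh t)
    (fun t _ => (hasDerivAt_sinhTaylor n t).add
      ((hasDerivAt_pow_succ_div_factorial (2 * n) t).const_mul C)) ?_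
    (fun t ht => h t (Set.Ico_subset_Icc_self ht))
  simp [sinhTaylor]

theorem cosh_le_coshTaylor_succ_add_of_sinh_le
    (h : ∀ t ∈ Set.Icc 0 r, sinh t ≤ sinhTaylor n t + C * (t ^ (2 * n + 1) / (2 * n + 1)!)) :
    ∀ x ∈ Set.Icc 0 r,
      cosh x ≤ coshTaylor (n + 1) x + C * (x ^ (2 * (n + 1)) / (2 * (n + 1))!) := by
  refine le_on_Icc_of_hasDerivAt_le (fun t _ => hasDerivAt_cosh t)
    (fun t _ => (hasDerivAt_coshTaylor_succ n t).add
      ((hasDerivAt_pow_succ_div_factorial (2 * n + 1) t).const_mul C)) ?_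
    (fun t ht => h t (Set.Ico_subset_Icc_self ht))
  simp [coshTaylor, Finset.sum_range_succ']

end TaylorUpperBound

theorem cosh_le_coshTaylor_add (n : ℕ) {r : ℝ} :
    ∀ x ∈ Set.Icc 0 r, cosh x ≤ coshTaylor n x + cosh r * (x ^ (2 * n) / (2 * n)!) := by
  induction n with
  | zero =>
    intro x hx
    simpa [coshTaylor, abs_of_nonneg hx.1, abs_of_nonneg (hx.1.trans hx.2)] using hx.2
  | succ n ih =>
    exact cosh_le_coshTaylor_succ_add_of_sinh_le (sinh_le_sinhTaylor_add_of_cosh_le ih)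

theorem sinh_le_sinhTaylor_add (n : ℕ) {r : ℝ} :
    ∀ x ∈ Set.Icc 0 r, sinh x ≤ sinhTaylor n x + cosh r * (x ^ (2 * n + 1) / (2 * n + 1)!) :=
  sinh_le_sinhTaylor_add_of_cosh_le (cosh_le_coshTaylor_add n)

-- At `x = r` the second order bound reads `cosh r ≤ 1 + r²/2 + cosh r * r⁴/24`;
-- solve for `cosh r`.
theorem cosh_1_3877_le : cosh 1.3877 ≤ 2.4 := by
  have h := cosh_le_coshTaylor_add 2 1.3877 ⟨by norm_num, le_rfl⟩
  norm_num [coshTaylor, Finset.sum_range_succ, Nat.factorial] at h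
  linarith

theorem cosh_le_coshTaylor_add_of_le_1_3877 (n : ℕ) {x : ℝ} (hx : x ∈ Set.Icc 0 1.3877) :
    cosh x ≤ coshTaylor n x + 2.4 * (x ^ (2 * n) / (2 * n)!) :=
  (cosh_le_coshTaylor_add n x hx).trans (by have := hx.1; gcongr; exact cosh_1_3877_le)

theorem sinh_le_sinhTaylor_add_of_le_1_3877 (n : ℕ) {x : ℝ} (hx : x ∈ Set.Icc 0 1.3877) :
    sinh x ≤ sinhTaylor n x + 2.4 * (x ^ (2 * n + 1) / (2 * n + 1)!) :=
  (sinh_le_sinhTaylor_add n x hx).trans (by have := hx.1; gcongr; exact cosh_1_3877_le)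

noncomputable def coth (x : ℝ) : ℝ := cosh x / sinh x

theorem mul_coth_le {x : ℝ} (hx : 0 < x) (hx' : x ≤ 1.3877) :
    x * coth x ≤ 1 + x ^ 2 / 3 - x ^ 4 / 60 := by
  have hcosh := cosh_le_coshTaylor_add_of_le_1_3877 4 ⟨hx.le, hx'⟩
  have hsinh := sinhTaylor_le_sinh 3 hx.le
  norm_num [coshTaylor, sinhTaylor, Finset.sum_range_succ, Nat.factorial] at hcosh hsinh
  have hsinh_pos : 0 < sinh x := sinh_pos_iff.mpr hx
  rw [coth, mul_div_assoc', div_le_iff₀ hsinh_pos]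
  have hx2 : x ^ 2 ≤ 1.93 := by nlinarith
  have hP : (0:ℝ) ≤ 1 + x ^ 2 / 3 - x ^ 4 / 60 := by nlinarith
  have hq : 0 ≤ x ^ 5 * (1 / 180 - x ^ 2 / 720 - x ^ 4 / 5040) :=
    mul_nonneg (by positivity) (by nlinarith)
  nlinarith [mul_le_mul_of_nonneg_right hsinh hP, mul_le_mul_of_nonneg_left hcosh hx.le]

theorem cosh_mul_sinh_sub_le {x : ℝ} (hx : 0 < x) (hx' : x ≤ 1.3877) :
    cosh x * sinh x - x ≤ sinh x ^ 2 * (2 * x / 3 - x ^ 3 / 16) := by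
  have hcosh := cosh_le_coshTaylor_add_of_le_1_3877 3 ⟨hx.le, hx'⟩
  have hsinh := sinh_le_sinhTaylor_add_of_le_1_3877 3 ⟨hx.le, hx'⟩
  have hsinh' := sinhTaylor_le_sinh 3 hx.le
  norm_num [coshTaylor, sinhTaylor, Finset.sum_range_succ, Nat.factorial] at hcosh hsinh hsinh'
  have hx2 : x ^ 2 ≤ 1.93 := by nlinarith
  have hcoef : (0:ℝ) ≤ 2 * x / 3 - x ^ 3 / 16 := by nlinarith
  have hsinh_nonneg : (0:ℝ) ≤ sinh x := by nlinarith
  have hq : 0 ≤ x ^ 5 * (19 / 720 - (463 / 75600) * x ^ 2 - (25 / 12096) * x ^ 4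
      - (529 / 3024000) * x ^ 6 - (239 / 40320000) * x ^ 8) := by
    have h4 : x ^ 4 ≤ 1.93 ^ 2 := by nlinarith
    have h6 : x ^ 6 ≤ 1.93 ^ 3 := by nlinarith
    have h8 : x ^ 8 ≤ 1.93 ^ 4 := by nlinarith
    exact mul_nonneg (by positivity) (by nlinarith)
  have hprod : cosh x * sinh x ≤ (1 + x ^ 2 / 2 + x ^ 4 / 24 + 12 / 5 * (x ^ 6 / 720)) *
      (x + x ^ 3 / 6 + x ^ 5 / 120 + 12 / 5 * (x ^ 7 / 5040)) := by
    nlinarith [cosh_pos x, mul_le_mul_of_nonneg_left hcosh hsinh_nonneg]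
  have hsq : (x + x ^ 3 / 6 + x ^ 5 / 120) ^ 2 ≤ sinh x ^ 2 := by
    have : (0:ℝ) ≤ x + x ^ 3 / 6 + x ^ 5 / 120 := by positivity
    nlinarith
  nlinarith [mul_le_mul_of_nonneg_right hsq hcoef]

theorem hasDerivAt_coth {x : ℝ} (hx : x ≠ 0) : HasDerivAt coth (1 - coth x ^ 2) x := by
  have hsinh : sinh x ≠ 0 := sinh_ne_zero.mpr hx
  refine ((hasDerivAt_cosh x).div (hasDerivAt_sinh x) hsinh).congr_deriv ?_
  rw [coth]
  field_simp

theorem mul_coth_sub_mul_coth_le {u v : ℝ} (hu : 0 < u) (huv : u ≤ v) (hv : v ≤ 1.3877) :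
    v * coth v - u * coth u ≤ (v ^ 2 / 3 - v ^ 4 / 64) - (u ^ 2 / 3 - u ^ 4 / 64) := by
  have hpoly : ∀ t : ℝ,
      HasDerivAt (fun s : ℝ => s ^ 2 / 3 - s ^ 4 / 64 - (u ^ 2 / 3 - u ^ 4 / 64))
        (2 * t / 3 - t ^ 3 / 16) t := fun t =>
    ((((hasDerivAt_pow 2 t).div_const 3).sub ((hasDerivAt_pow 4 t).div_const 64)).sub_const _
      ).congr_deriv (by push_cast; ring)
  refine le_on_Icc_of_hasDerivAt_le
    (fun t ht => (((hasDerivAt_id t).mul (hasDerivAt_coth (hu.trans_le ht.1).ne')).sub_const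
      (u * coth u))) (fun t _ => hpoly t) (by simp) (fun t htuv => ?_) v ⟨huv, le_rfl⟩
  have ht : 0 < t := hu.trans_le htuv.1
  have hsinh : 0 < sinh t := sinh_pos_iff.mpr ht
  have hderiv : 1 * coth t + t * (1 - coth t ^ 2) = (cosh t * sinh t - t) / sinh t ^ 2 := by
    rw [coth]; field_simp; linear_combination -t * cosh_sq' t
  simp only [id, hderiv]
  rw [div_le_iff₀ (by positivity)]
  linarith [cosh_mul_sinh_sub_le ht (by linarith [htuv.2])]

theorem two_mul_mul_coth_mul_sub_le {u v : ℝ} (hu : 0 < u) (huv : u ≤ v) (hv : v ≤ 1.3877) :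
    2 * (v * coth v) * (v * coth v - u * coth u) ≤ v ^ 2 - u ^ 2 := by
  have hv0 : 0 < v := hu.trans_le huv
  have hq : 0 ≤ v * coth v := mul_nonneg hv0.le (div_pos (cosh_pos v) (sinh_pos_iff.mpr hv0)).le
  have hv2 : v ^ 2 ≤ 1.93 := by nlinarith
  have huv2 : u ^ 2 ≤ v ^ 2 := by gcongr
  have hpoly : ∀ y z : ℝ, 0 ≤ z → z ≤ y → y ≤ 1.93 →
      2 * (1 + y / 3 - y ^ 2 / 60) * (1 / 3 - (y + z) / 64) ≤ 1 := by
    intros; nlinarith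
  have hfactor : (v ^ 2 / 3 - v ^ 4 / 64) - (u ^ 2 / 3 - u ^ 4 / 64) =
      (v ^ 2 - u ^ 2) * (1 / 3 - (v ^ 2 + u ^ 2) / 64) := by ring
  have hK : 0 ≤ (v ^ 2 / 3 - v ^ 4 / 64) - (u ^ 2 / 3 - u ^ 4 / 64) := by
    rw [hfactor]; exact mul_nonneg (by linarith) (by linarith)
  calc 2 * (v * coth v) * (v * coth v - u * coth u)
      ≤ 2 * (v * coth v) * ((v ^ 2 / 3 - v ^ 4 / 64) - (u ^ 2 / 3 - u ^ 4 / 64)) :=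
        mul_le_mul_of_nonneg_left (mul_coth_sub_mul_coth_le hu huv hv) (by linarith)
    _ ≤ 2 * (1 + v ^ 2 / 3 - v ^ 4 / 60) *
          ((v ^ 2 / 3 - v ^ 4 / 64) - (u ^ 2 / 3 - u ^ 4 / 64)) :=
        mul_le_mul_of_nonneg_right (by linarith [mul_coth_le hv0 hv]) hK
    _ = (v ^ 2 - u ^ 2) *
          (2 * (1 + v ^ 2 / 3 - (v ^ 2) ^ 2 / 60) * (1 / 3 - (v ^ 2 + u ^ 2) / 64)) := by
        rw [hfactor]; ring
    _ ≤ (v ^ 2 - u ^ 2) * 1 :=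
        mul_le_mul_of_nonneg_left (hpoly _ _ (sq_nonneg u) huv2 hv2) (by linarith)
    _ = v ^ 2 - u ^ 2 := mul_one _

theorem iteratedDeriv_two_eq_of_hasDerivAt {𝕜 F : Type*} [NontriviallyNormedField 𝕜]
    [NormedAddCommGroup F] [NormedSpace 𝕜 F] {f f' : 𝕜 → F} {f'' : F} {x : 𝕜}
    (hf : ∀ᶠ t in nhds x, HasDerivAt f (f' t) t) (hf' : HasDerivAt f' f'' x) :
    iteratedDeriv 2 f x = f'' := by
  rw [iteratedDeriv_succ, iteratedDeriv_one, (hf'.congr_of_eventuallyEq _).deriv]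
  filter_upwards [hf] with t ht using ht.deriv

section SinhDivSinh

variable {a b x : ℝ}

theorem hasDerivAt_coth_const_mul (ha : a ≠ 0) (hx : x ≠ 0) :
    HasDerivAt (fun t => coth (a * t)) ((1 - coth (a * x) ^ 2) * a) x :=
  (hasDerivAt_coth (mul_ne_zero ha hx)).comp x (by simpa using (hasDerivAt_id x).const_mul a)

theorem hasDerivAt_sinh_mul_div_sinh_mul (ha : a ≠ 0) (hb : b ≠ 0) (hx : x ≠ 0) :
    HasDerivAt (fun t => sinh (a * t) / sinh (b * t))
      (sinh (a * x) / sinh (b * x) * (a * coth (a * x) - b * coth (b * x))) x := by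
  have hsa : sinh (a * x) ≠ 0 := sinh_ne_zero.mpr (mul_ne_zero ha hx)
  have hsb : sinh (b * x) ≠ 0 := sinh_ne_zero.mpr (mul_ne_zero hb hx)
  have hda : HasDerivAt (fun t => sinh (a * t)) (cosh (a * x) * a) x := by
    simpa using ((hasDerivAt_id x).const_mul a).sinh
  have hdb : HasDerivAt (fun t => sinh (b * t)) (cosh (b * x) * b) x := by
    simpa using ((hasDerivAt_id x).const_mul b).sinh
  refine (hda.div hdb hsb).congr_deriv ?_
  simp only [coth]
  field_simp

theorem hasDerivAt_deriv_sinh_mul_div_sinh_mul (ha : a ≠ 0) (hb : b ≠ 0) (hx : x ≠ 0) :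
    HasDerivAt (fun t => sinh (a * t) / sinh (b * t) * (a * coth (a * t) - b * coth (b * t)))
      (sinh (a * x) / sinh (b * x) *
        (2 * b * coth (b * x) * (b * coth (b * x) - a * coth (a * x)) + a ^ 2 - b ^ 2)) x := by
  refine ((hasDerivAt_sinh_mul_div_sinh_mul ha hb hx).mul
    (((hasDerivAt_coth_const_mul ha hx).const_mul a).fun_sub
      ((hasDerivAt_coth_const_mul hb hx).const_mul b))).congr_deriv ?_
  ring

end SinhDivSinh

/-- For `0 < a ≤ b ≤ 1.3877` and `0 < x ≤ 1`, the second derivative of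
`x ↦ sinh(a·x)/sinh(b·x)` at `x` is nonpositive. -/
theorem stmt_16 (a b : ℝ) (ha : 0 < a) (hab : a ≤ b) (hb : b ≤ 1.3877) :
    ∀ x : ℝ, 0 < x → x ≤ 1 →
      iteratedDeriv 2 (fun t => sinh (a * t) / sinh (b * t)) x ≤ 0 := by
  intro x hx hx1
  have hb0 : 0 < b := ha.trans_le hab
  have hfirst : ∀ᶠ t in nhds x, HasDerivAt (fun t => sinh (a * t) / sinh (b * t))
      (sinh (a * t) / sinh (b * t) * (a * coth (a * t) - b * coth (b * t))) t := by
    filter_upwards [lt_mem_nhds hx] with t ht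
    exact hasDerivAt_sinh_mul_div_sinh_mul ha.ne' hb0.ne' ht.ne'
  rw [iteratedDeriv_two_eq_of_hasDerivAt hfirst
    (hasDerivAt_deriv_sinh_mul_div_sinh_mul ha.ne' hb0.ne' hx.ne')]
  have hratio : 0 < sinh (a * x) / sinh (b * x) :=
    div_pos (sinh_pos_iff.mpr (by positivity)) (sinh_pos_iff.mpr (by positivity))
  have hcore := two_mul_mul_coth_mul_sub_le (mul_pos ha hx) (by gcongr)
    (by nlinarith : b * x ≤ 1.3877)
  refine mul_nonpos_of_nonneg_of_nonpos hratio.le (nonpos_of_mul_nonpos_right ?_ (pow_pos hx 2))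
  linear_combination hcore
end
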